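/- The convex hull operation conv(S₁,S₂) = { ½(1+λ)s₁ + ½(1-λ)s₂ : s₁ ∈ S₁, s₂ ∈ S₂, λ ∈ [-1,1] } applied to two CPZs ⟨c₁,G₁,E₁,A₁,b₁,R₁⟩ and ⟨c₂,G₂,E₂,A₂,b₂,R₂⟩ equals the CPZ with starting point ½(c₁+c₂), generator matrix ½[(c₁-c₂) G₁ G₁ G₂ -G₂], exponent matrix with p₁+p₂+1 rows whose columns correspond to: the new factor λ alone; E₁ columns; E₁ columns with λ-exponent 1 added; E₂ columns; E₂ columns with λ-exponent 1 added; and constraints blockdiag(A₁,A₂), [b₁;b₂], [[R₁,0],[0,R₂],[0,0]]. -/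

import Mathlib

open Finset Matrix Set

noncomputable section

/-- Monomial `∏ k, α k ^ e k`. -/
def mono {p : Type*} [Fintype p] (α : p → ℝ) (e : p → ℕ) : ℝ := ∏ k, α k ^ e k

/-- All factors lie in `[-1,1]`. -/
def inBox {p : Type*} (α : p → ℝ) : Prop := ∀ k, α k ∈ Set.Icc (-1 : ℝ) 1

/-- Constrained polynomial zonotope. -/
def CPZ {n p h m q : Type*} [Fintype n] [Fintype p] [Fintype h] [Fintype m] [Fintype q]
    (c : n → ℝ) (G : Matrix n h ℝ) (E : Matrix p h ℕ)
    (A : Matrix m q ℝ) (b : m → ℝ) (R : Matrix p q ℕ) : Set (n → ℝ) :=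
  {x | ∃ α : p → ℝ, inBox α ∧
    (∑ i, mono α (fun k => R k i) • (fun j => A j i)) = b ∧
    x = c + ∑ i, mono α (fun k => E k i) • (fun j => G j i)}
variable {n p₁ p₂ h₁ h₂ m₁ m₂ q₁ q₂ : ℕ}

/-- Generator matrix ½ [(c₁-c₂) G₁ G₁ G₂ -G₂] of the convex-hull CPZ. -/
def chG (c₁ c₂ : Fin n → ℝ) (G₁ : Matrix (Fin n) (Fin h₁) ℝ) (G₂ : Matrix (Fin n) (Fin h₂) ℝ) :
    Matrix (Fin n) (Unit ⊕ (Fin h₁ ⊕ Fin h₁) ⊕ (Fin h₂ ⊕ Fin h₂)) ℝ :=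
  fun i j => (1 / 2) * match j with
    | .inl _ => c₁ i - c₂ i
    | .inr (.inl (.inl jj)) => G₁ i jj
    | .inr (.inl (.inr jj)) => G₁ i jj
    | .inr (.inr (.inl jj)) => G₂ i jj
    | .inr (.inr (.inr jj)) => -G₂ i jj

/-- Exponent matrix of the convex-hull CPZ; the extra factor (index `Sum.inr ()`) is λ. -/
def chE (E₁ : Matrix (Fin p₁) (Fin h₁) ℕ) (E₂ : Matrix (Fin p₂) (Fin h₂) ℕ) :
    Matrix ((Fin p₁ ⊕ Fin p₂) ⊕ Unit) (Unit ⊕ (Fin h₁ ⊕ Fin h₁) ⊕ (Fin h₂ ⊕ Fin h₂)) ℕ :=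
  fun k j => match k, j with
    | .inl (.inl kk), .inr (.inl (.inl jj)) => E₁ kk jj
    | .inl (.inl kk), .inr (.inl (.inr jj)) => E₁ kk jj
    | .inl (.inr kk), .inr (.inr (.inl jj)) => E₂ kk jj
    | .inl (.inr kk), .inr (.inr (.inr jj)) => E₂ kk jj
    | .inr _, .inl _ => 1
    | .inr _, .inr (.inl (.inr _)) => 1
    | .inr _, .inr (.inr (.inr _)) => 1
    | _, _ => 0

/-- Constraint exponent matrix [[R₁,0],[0,R₂],[0,0]] of the convex-hull CPZ. -/
def chR (R₁ : Matrix (Fin p₁) (Fin q₁) ℕ) (R₂ : Matrix (Fin p₂) (Fin q₂) ℕ) :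
    Matrix ((Fin p₁ ⊕ Fin p₂) ⊕ Unit) (Fin q₁ ⊕ Fin q₂) ℕ :=
  fun k j => match k with
    | .inl kk => Matrix.fromBlocks R₁ 0 0 R₂ kk j
    | .inr _ => 0

/-!
Split the factors of the hull as `α = (α₁, α₂, λ)`. The constraint data is block diagonal and
does not involve `λ`, so `α` satisfies it iff `α₁` and `α₂` satisfy the constraints of the two
CPZs. The hull's monomials are `λ`, the monomials `m₁` of the first CPZ, `λ m₁`, the monomials
`m₂` of the second, and `λ m₂`; with the generators `½(c₁ - c₂)`, `½G₁`, `½G₁`, `½G₂`, `-½G₂` the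
point is `½(c₁ + c₂) + ½λ(c₁ - c₂) + ½(1 + λ)G₁m₁ + ½(1 - λ)G₂m₂ = ½(1 + λ)s₁ + ½(1 - λ)s₂`.
-/

section

variable {ι p p' h m q : Type*} [Fintype p] [Fintype p'] [Fintype h] [Fintype m] [Fintype q]

def cpzPoint (c : ι → ℝ) (G : Matrix ι h ℝ) (E : Matrix p h ℕ) (α : p → ℝ) : ι → ℝ :=
  c + ∑ i, mono α (fun k => E k i) • (fun j => G j i)

def cpzConstraint (A : Matrix m q ℝ) (R : Matrix p q ℕ) (α : p → ℝ) : m → ℝ :=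
  ∑ i, mono α (fun k => R k i) • (fun j => A j i)

theorem mem_CPZ_iff [Fintype ι] (c : ι → ℝ) (G : Matrix ι h ℝ) (E : Matrix p h ℕ)
    (A : Matrix m q ℝ) (b : m → ℝ) (R : Matrix p q ℕ) (x : ι → ℝ) :
    x ∈ CPZ c G E A b R ↔
      ∃ α : p → ℝ, inBox α ∧ cpzConstraint A R α = b ∧ x = cpzPoint c G E α :=
  Iff.rfl

@[simp]
theorem mono_zero (α : p → ℝ) : mono α (fun _ => 0) = 1 := by
  simp [mono]

@[simp]
theorem mono_sum (α : p ⊕ p' → ℝ) (e : p ⊕ p' → ℕ) :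
    mono α e = mono (fun k => α (.inl k)) (fun k => e (.inl k)) *
      mono (fun k => α (.inr k)) (fun k => e (.inr k)) :=
  Fintype.prod_sum_type _

@[simp]
theorem mono_unit (α : Unit → ℝ) (e : Unit → ℕ) : mono α e = α () ^ e () :=
  Fintype.prod_unique _

end

theorem cpzConstraint_fromBlocks_chR (A₁ : Matrix (Fin m₁) (Fin q₁) ℝ)
    (R₁ : Matrix (Fin p₁) (Fin q₁) ℕ) (A₂ : Matrix (Fin m₂) (Fin q₂) ℝ)
    (R₂ : Matrix (Fin p₂) (Fin q₂) ℕ) (α : (Fin p₁ ⊕ Fin p₂) ⊕ Unit → ℝ) :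
    cpzConstraint (fromBlocks A₁ 0 0 A₂) (chR R₁ R₂) α =
      Sum.elim (cpzConstraint A₁ R₁ fun k => α (.inl (.inl k)))
        (cpzConstraint A₂ R₂ fun k => α (.inl (.inr k))) := by
  ext (j | j) <;> simp [cpzConstraint, Fintype.sum_sum_type, chR, Finset.sum_apply]

theorem cpzPoint_chG_chE (c₁ : Fin n → ℝ) (G₁ : Matrix (Fin n) (Fin h₁) ℝ)
    (E₁ : Matrix (Fin p₁) (Fin h₁) ℕ) (c₂ : Fin n → ℝ) (G₂ : Matrix (Fin n) (Fin h₂) ℝ)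
    (E₂ : Matrix (Fin p₂) (Fin h₂) ℕ) (α : (Fin p₁ ⊕ Fin p₂) ⊕ Unit → ℝ) :
    cpzPoint ((1 / 2 : ℝ) • (c₁ + c₂)) (chG c₁ c₂ G₁ G₂) (chE E₁ E₂) α =
      ((1 / 2) * (1 + α (.inr ()))) • cpzPoint c₁ G₁ E₁ (fun k => α (.inl (.inl k))) +
      ((1 / 2) * (1 - α (.inr ()))) • cpzPoint c₂ G₂ E₂ (fun k => α (.inl (.inr k))) := by
  ext j
  simp only [cpzPoint, chE, chG, Fintype.sum_sum_type, mono_sum, mono_unit, mono_zero,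
    Finset.univ_unique, Finset.sum_singleton, Finset.sum_apply, Finset.sum_neg_distrib,
    Pi.add_apply, Pi.smul_apply, smul_eq_mul, smul_add, one_div, mul_one, one_mul, mul_neg,
    pow_zero, pow_one]
  -- pull `½` and `λ` out of the generator sums; what remains is ring arithmetic
  simp only [mul_left_comm _ (2⁻¹ : ℝ), mul_right_comm _ (α (.inr ())), ← Finset.mul_sum,
    ← Finset.sum_mul]
  ring

/-- Convex hull of two CPZs. -/
theorem CPZ_convex_hull
    (c₁ : Fin n → ℝ) (G₁ : Matrix (Fin n) (Fin h₁) ℝ) (E₁ : Matrix (Fin p₁) (Fin h₁) ℕ)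
    (A₁ : Matrix (Fin m₁) (Fin q₁) ℝ) (b₁ : Fin m₁ → ℝ) (R₁ : Matrix (Fin p₁) (Fin q₁) ℕ)
    (c₂ : Fin n → ℝ) (G₂ : Matrix (Fin n) (Fin h₂) ℝ) (E₂ : Matrix (Fin p₂) (Fin h₂) ℕ)
    (A₂ : Matrix (Fin m₂) (Fin q₂) ℝ) (b₂ : Fin m₂ → ℝ) (R₂ : Matrix (Fin p₂) (Fin q₂) ℕ) :
    {x : Fin n → ℝ | ∃ s₁ ∈ CPZ c₁ G₁ E₁ A₁ b₁ R₁, ∃ s₂ ∈ CPZ c₂ G₂ E₂ A₂ b₂ R₂,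
      ∃ lam ∈ Set.Icc (-1 : ℝ) 1,
      x = ((1 / 2) * (1 + lam)) • s₁ + ((1 / 2) * (1 - lam)) • s₂} =
    CPZ ((1 / 2 : ℝ) • (c₁ + c₂)) (chG c₁ c₂ G₁ G₂) (chE E₁ E₂)
      (Matrix.fromBlocks A₁ 0 0 A₂) (Sum.elim b₁ b₂) (chR R₁ R₂) := by
  ext x
  simp only [Set.mem_ofPred_eq, mem_CPZ_iff, cpzConstraint_fromBlocks_chR]
  constructor
  · rintro ⟨_, ⟨α₁, hα₁, hb₁, rfl⟩, _, ⟨α₂, hα₂, hb₂, rfl⟩, lam, hlam, rfl⟩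
    refine ⟨Sum.elim (Sum.elim α₁ α₂) fun _ => lam, ?_, by rw [← hb₁, ← hb₂]; rfl,
      by rw [cpzPoint_chG_chE]; rfl⟩
    rintro ((k | k) | k)
    exacts [hα₁ k, hα₂ k, hlam]
  · rintro ⟨α, hα, hb, rfl⟩
    rw [Sum.elim_eq_iff] at hb
    exact ⟨_, ⟨_, fun k => hα _, hb.1, rfl⟩, _, ⟨_, fun k => hα _, hb.2, rfl⟩,
      α (.inr ()), hα _, cpzPoint_chG_chE ..⟩
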